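/- arXiv:2102.07093 — 5 statements merged into one kernel-verified Lean document; each statement's English description precedes it below -/
import Mathlib

section
/- Let σ₁, σ₂, ν₁, ν₂ be positive reals, let Q₁ and Q₂ be d×d real positive definite matrices, and set Q = ν₁·Q₁ + ν₂·Q₂. Then (σ₁²/ν₁)·Q₁⁻¹ + (σ₂²/ν₂)·Q₂⁻¹ ⪰ (σ₁+σ₂)²·Q⁻¹. Moreover, if Q₁ = Q₂ = Q and ν₁ = σ₁/(σ₁+σ₂), ν₂ = σ₂/(σ₁+σ₂), then equality holds: (σ₁²/ν₁)·Q₁⁻¹ + (σ₂²/ν₂)·Q₂⁻¹ = (σ₁+σ₂)²·Q⁻¹. -/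
/-!
Expanding `(t • A⁻¹ - P)ᴴ * A * (t • A⁻¹ - P) ⪰ 0` gives `t² • A⁻¹ ⪰ 2t • P - P * A * P` for
every positive definite `A` and Hermitian `P`. Adding this for `(A, a)` and `(B, b)` with
`P = (a + b) • (A + B)⁻¹` makes the quadratic terms collapse to `(a + b) • P`, which yields
`a² • A⁻¹ + b² • B⁻¹ ⪰ (a + b)² • (A + B)⁻¹`; the theorem is the case `A = ν₁ • Q₁`,
`B = ν₂ • Q₂`.
-/

open Matrix
open scoped ComplexOrder

namespace Matrix.PosDef

variable {n 𝕜 : Type*} [Fintype n] [DecidableEq n] [RCLike 𝕜]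

lemma conjTranspose_smul_inv_sub_mul_mul {A : Matrix n n 𝕜} (hA : A.PosDef)
    {P : Matrix n n 𝕜} (hP : P.IsHermitian) (t : ℝ) :
    (t • A⁻¹ - P)ᴴ * A * (t • A⁻¹ - P) = t ^ 2 • A⁻¹ - (2 * t) • P + P * A * P := by
  have hdet : IsUnit A.det := hA.det_pos.ne'.isUnit
  rw [conjTranspose_sub, conjTranspose_smul, hA.inv.isHermitian.eq, hP.eq, star_trivial]
  simp only [Matrix.sub_mul, Matrix.mul_sub, Matrix.smul_mul, Matrix.mul_smul, Matrix.mul_assoc,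
    nonsing_inv_mul A hdet, mul_nonsing_inv A hdet, Matrix.one_mul, Matrix.mul_one]
  module

lemma sq_smul_inv_add_sq_smul_inv_sub_posSemidef {A B : Matrix n n 𝕜} (hA : A.PosDef)
    (hB : B.PosDef) (a b : ℝ) :
    (a ^ 2 • A⁻¹ + b ^ 2 • B⁻¹ - (a + b) ^ 2 • (A + B)⁻¹).PosSemidef := by
  have hAB := hA.add hB
  set P := (a + b) • (A + B)⁻¹
  have hP : P.IsHermitian := (IsSelfAdjoint.all (a + b)).smul hAB.inv.isHermitian
  have hquad : P * A * P + P * B * P = (a + b) • P := by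
    rw [← Matrix.add_mul, ← Matrix.mul_add, Matrix.mul_assoc, Matrix.mul_smul,
      mul_nonsing_inv _ hAB.det_pos.ne'.isUnit, Matrix.mul_smul, Matrix.mul_one]
  have hsum := (hA.posSemidef.conjTranspose_mul_mul_same (a • A⁻¹ - P)).add
    (hB.posSemidef.conjTranspose_mul_mul_same (b • B⁻¹ - P))
  rw [hA.conjTranspose_smul_inv_sub_mul_mul hP, hB.conjTranspose_smul_inv_sub_mul_mul hP,
    add_add_add_comm, hquad] at hsum
  convert hsum using 1
  module

end Matrix.PosDef

lemma Matrix.inv_smul_of_ne_zero {n K : Type*} [Fintype n] [DecidableEq n] [Field K]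
    {A : Matrix n n K} (hA : IsUnit A.det) {c : K} (hc : c ≠ 0) : (c • A)⁻¹ = c⁻¹ • A⁻¹ := by
  let _ := invertibleOfNonzero hc
  simpa only [invOf_eq_inv] using Matrix.inv_smul A c hA

/-- For positive reals `σ₁ σ₂ ν₁ ν₂` and positive definite `Q₁ Q₂` with
`Q = ν₁ • Q₁ + ν₂ • Q₂`, we have
`(σ₁²/ν₁) • Q₁⁻¹ + (σ₂²/ν₂) • Q₂⁻¹ ⪰ (σ₁+σ₂)² • Q⁻¹`, with equality when
`Q₁ = Q₂ = Q` and `ν₁ = σ₁/(σ₁+σ₂)`, `ν₂ = σ₂/(σ₁+σ₂)`. -/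
theorem variance_matrix_lower_bound
    (d : ℕ) (σ1 σ2 ν1 ν2 : ℝ)
    (hσ1 : 0 < σ1) (hσ2 : 0 < σ2) (hν1 : 0 < ν1) (hν2 : 0 < ν2)
    (Q1 Q2 Q : Matrix (Fin d) (Fin d) ℝ)
    (hQ1 : Q1.PosDef) (hQ2 : Q2.PosDef)
    (hQ : Q = ν1 • Q1 + ν2 • Q2) :
    ((σ1 ^ 2 / ν1) • Q1⁻¹ + (σ2 ^ 2 / ν2) • Q2⁻¹
        - (σ1 + σ2) ^ 2 • Q⁻¹).PosSemidef
    ∧ (Q1 = Q → Q2 = Q → ν1 = σ1 / (σ1 + σ2) → ν2 = σ2 / (σ1 + σ2) →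
        (σ1 ^ 2 / ν1) • Q1⁻¹ + (σ2 ^ 2 / ν2) • Q2⁻¹ = (σ1 + σ2) ^ 2 • Q⁻¹) := by
  refine ⟨?_, ?_⟩
  · have h := (hQ1.smul hν1).sq_smul_inv_add_sq_smul_inv_sub_posSemidef (hQ2.smul hν2) σ1 σ2
    rwa [← hQ, inv_smul_of_ne_zero hQ1.det_pos.ne'.isUnit hν1.ne',
      inv_smul_of_ne_zero hQ2.det_pos.ne'.isUnit hν2.ne', smul_smul, smul_smul,
      ← div_eq_mul_inv, ← div_eq_mul_inv] at h
  · rintro rfl rfl rfl rfl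
    rw [← add_smul]
    congr 1
    field_simp
end

section
/- For every x ∈ [0,1]^p one has V_π(x) ≥ (σ₁+σ₂)² · (1,xᵀ) Q⁻¹ (1,xᵀ)ᵀ; that is, V_π(x) is minimized uniformly in x by the constant allocation π₁(x) ≡ σ₁/(σ₁+σ₂), π₂(x) ≡ σ₂/(σ₁+σ₂), for which V_π(x) = (σ₁+σ₂)² · (1,xᵀ) Q⁻¹ (1,xᵀ)ᵀ for all x. -/
/-!
Write `A = ν₁ Q₁` and `B = ν₂ Q₂`, so that `Q = A + B` and `Σₖ = σₖ² Aₖ⁻¹`. For positive definite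
`M` one has `vᵀ M⁻¹ v = max_w (2 wᵀv - wᵀ M w)`. Evaluating this for `M = A` and `M = B` at
`w = ((σ₁ + σ₂) / σₖ) (A + B)⁻¹ v` and adding gives
`σ₁² vᵀA⁻¹v + σ₂² vᵀB⁻¹v ≥ (σ₁ + σ₂)² vᵀ(A + B)⁻¹v`.
For the constant allocation `Q₁ = Q₂ = Q` and `νₖ = σₖ / (σ₁ + σ₂)`, so both sides agree.
-/

open Matrix MeasureTheory

/-- The feature vector `(1, xᵀ)ᵀ ∈ ℝ^{p+1}` of a covariate vector `x ∈ ℝ^p`. -/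
def feat {p : ℕ} (x : Fin p → ℝ) : Fin (p + 1) → ℝ := Fin.cons 1 x

namespace Matrix

variable {n : Type*} [Fintype n] [DecidableEq n]

theorem PosDef.two_mul_dotProduct_sub_le_dotProduct_inv_mulVec {M : Matrix n n ℝ}
    (hM : M.PosDef) (v w : n → ℝ) :
    2 * (w ⬝ᵥ v) - w ⬝ᵥ M *ᵥ w ≤ v ⬝ᵥ M⁻¹ *ᵥ v := by
  set u := M⁻¹ *ᵥ v
  have hMu : M *ᵥ u = v := by
    rw [mulVec_mulVec, mul_nonsing_inv M hM.det_pos.ne'.isUnit, one_mulVec]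
  have huM : u ᵥ* M = v := by
    rw [← mulVec_transpose, ← conjTranspose_eq_transpose_of_trivial, hM.isHermitian.eq, hMu]
  have := hM.posSemidef.dotProduct_mulVec_nonneg (w - u)
  simp only [star_trivial, mulVec_sub, dotProduct_sub, sub_dotProduct, hMu] at this
  rw [dotProduct_mulVec u, huM, dotProduct_comm u v, dotProduct_comm v w] at this
  linarith

theorem inv_smul_of_ne_zero_s2 {K : Type*} [Field K] (A : Matrix n n K) {k : K} (hk : k ≠ 0)
    (hA : IsUnit A.det) : (k • A)⁻¹ = k⁻¹ • A⁻¹ :=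
  inv_eq_right_inv (by rw [smul_mul_smul_comm, mul_inv_cancel₀ hk, one_smul, mul_nonsing_inv A hA])

theorem PosDef.sq_add_mul_dotProduct_inv_add_le {A B : Matrix n n ℝ} (hA : A.PosDef)
    (hB : B.PosDef) {a b : ℝ} (ha : a ≠ 0) (hb : b ≠ 0) (v : n → ℝ) :
    (a + b) ^ 2 * (v ⬝ᵥ (A + B)⁻¹ *ᵥ v) ≤ v ⬝ᵥ ((a ^ 2 • A⁻¹ + b ^ 2 • B⁻¹) *ᵥ v) := by
  set u := (A + B)⁻¹ *ᵥ v
  have hu : u ⬝ᵥ A *ᵥ u + u ⬝ᵥ B *ᵥ u = u ⬝ᵥ v := by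
    rw [← dotProduct_add, ← add_mulVec, mulVec_mulVec,
      mul_nonsing_inv _ (hA.add hB).det_pos.ne'.isUnit, one_mulVec]
  have hweighted : ∀ {c : ℝ} {M : Matrix n n ℝ}, c ≠ 0 → M.PosDef →
      2 * c * (a + b) * (u ⬝ᵥ v) - (a + b) ^ 2 * (u ⬝ᵥ M *ᵥ u) ≤ c ^ 2 * (v ⬝ᵥ M⁻¹ *ᵥ v) := by
    intro c M hc hM
    have h := mul_le_mul_of_nonneg_left
      (hM.two_mul_dotProduct_sub_le_dotProduct_inv_mulVec v (((a + b) / c) • u)) (sq_nonneg c)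
    simp only [mulVec_smul, smul_dotProduct, dotProduct_smul, smul_eq_mul] at h
    refine (le_of_eq ?_).trans h
    field_simp
  rw [add_mulVec, dotProduct_add, smul_mulVec, smul_mulVec, dotProduct_smul, dotProduct_smul,
    smul_eq_mul, smul_eq_mul, dotProduct_comm v u]
  linear_combination hweighted ha hA + hweighted hb hB + (a + b) ^ 2 * hu

end Matrix

section Moments

variable {p : ℕ}

theorem continuous_feat : Continuous (feat : (Fin p → ℝ) → Fin (p + 1) → ℝ) :=
  continuous_const.finCons continuous_id

noncomputable def momentMatrix (S : Set (Fin p → ℝ)) (g : (Fin p → ℝ) → ℝ) :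
    Matrix (Fin (p + 1)) (Fin (p + 1)) ℝ :=
  Matrix.of fun i j => ∫ x in S, feat x i * feat x j * g x

theorem momentMatrix_add {S : Set (Fin p → ℝ)} (hS : IsCompact S) {g₁ g₂ : (Fin p → ℝ) → ℝ}
    (hg₁ : IntegrableOn g₁ S) (hg₂ : IntegrableOn g₂ S) :
    momentMatrix S (fun x => g₁ x + g₂ x) = momentMatrix S g₁ + momentMatrix S g₂ := by
  ext i j
  have hfeat : ContinuousOn (fun x : Fin p → ℝ => feat x i * feat x j) S :=
    (((continuous_apply i).comp continuous_feat).mul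
      ((continuous_apply j).comp continuous_feat)).continuousOn
  simp only [momentMatrix, of_apply, Matrix.add_apply, mul_add]
  exact integral_add (hg₁.continuousOn_mul hfeat hS) (hg₂.continuousOn_mul hfeat hS)

theorem momentMatrix_const_mul (S : Set (Fin p → ℝ)) (c : ℝ) (g : (Fin p → ℝ) → ℝ) :
    momentMatrix S (fun x => c * g x) = c • momentMatrix S g := by
  ext i j
  simp only [momentMatrix, of_apply, Matrix.smul_apply, smul_eq_mul, ← integral_const_mul]
  congr 1 with x
  ring

theorem smul_eq_momentMatrix {S : Set (Fin p → ℝ)} {π f : (Fin p → ℝ) → ℝ} {ν : ℝ} (hν : ν ≠ 0)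
    {M : Matrix (Fin (p + 1)) (Fin (p + 1)) ℝ}
    (hM : ∀ i j, M i j = (1 / ν) * ∫ x in S, feat x i * feat x j * π x * f x) :
    ν • M = momentMatrix S (fun x => π x * f x) := by
  ext i j
  rw [Matrix.smul_apply, hM, smul_eq_mul]
  simp only [momentMatrix, of_apply, mul_assoc]
  field_simp

theorem eq_momentMatrix_of_const {S : Set (Fin p → ℝ)} {f : (Fin p → ℝ) → ℝ} {c : ℝ} (hc : c ≠ 0)
    {M : Matrix (Fin (p + 1)) (Fin (p + 1)) ℝ}
    (hM : ∀ i j, M i j = (1 / c) * ∫ x in S, feat x i * feat x j * c * f x) :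
    M = momentMatrix S f :=
  smul_right_injective _ hc
    ((smul_eq_momentMatrix (π := fun _ => c) hc hM).trans (momentMatrix_const_mul S c f))

end Moments

theorem variance_uniformly_minimized_general
    (p : ℕ)
    (f π1 π2 : (Fin p → ℝ) → ℝ) (σ1 σ2 : ℝ)
    (hσ1 : 0 < σ1) (hσ2 : 0 < σ2)
    (hf_density : ∫ x in Set.Icc (0 : Fin p → ℝ) 1, f x = 1)
    (hπ_sum : ∀ x, π1 x + π2 x = 1)
    (ν1 ν2 : ℝ)
    (hν1 : ν1 = ∫ x in Set.Icc (0 : Fin p → ℝ) 1, π1 x * f x)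
    (hν2 : ν2 = ∫ x in Set.Icc (0 : Fin p → ℝ) 1, π2 x * f x)
    (hν1_pos : 0 < ν1) (hν2_pos : 0 < ν2)
    (Q1 Q2 Q : Matrix (Fin (p + 1)) (Fin (p + 1)) ℝ)
    (hQ1 : ∀ i j, Q1 i j =
      (1 / ν1) * ∫ x in Set.Icc (0 : Fin p → ℝ) 1,
        feat x i * feat x j * π1 x * f x)
    (hQ2 : ∀ i j, Q2 i j =
      (1 / ν2) * ∫ x in Set.Icc (0 : Fin p → ℝ) 1,
        feat x i * feat x j * π2 x * f x)
    (hQ : ∀ i j, Q i j =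
      ∫ x in Set.Icc (0 : Fin p → ℝ) 1, feat x i * feat x j * f x)
    (hQ1_pos : Q1.PosDef) (hQ2_pos : Q2.PosDef) :
    (∀ x ∈ Set.Icc (0 : Fin p → ℝ) 1,
      (σ1 + σ2) ^ 2 * (feat x ⬝ᵥ (Q⁻¹ *ᵥ feat x)) ≤
        feat x ⬝ᵥ (((σ1 ^ 2 / ν1) • Q1⁻¹ + (σ2 ^ 2 / ν2) • Q2⁻¹) *ᵥ feat x))
    ∧ ((π1 = fun _ => σ1 / (σ1 + σ2)) → (π2 = fun _ => σ2 / (σ1 + σ2)) →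
      ∀ x ∈ Set.Icc (0 : Fin p → ℝ) 1,
        feat x ⬝ᵥ (((σ1 ^ 2 / ν1) • Q1⁻¹ + (σ2 ^ 2 / ν2) • Q2⁻¹) *ᵥ feat x) =
        (σ1 + σ2) ^ 2 * (feat x ⬝ᵥ (Q⁻¹ *ᵥ feat x))) := by
  set S := Set.Icc (0 : Fin p → ℝ) 1
  have hQ_def : Q = momentMatrix S f := by ext i j; exact hQ i j
  -- The integral of a non-integrable function is `0`, so `νₖ > 0` forces `πₖ f` to be integrable.
  have hint : ∀ {π : (Fin p → ℝ) → ℝ} {ν : ℝ}, ν = ∫ x in S, π x * f x → 0 < ν →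
      IntegrableOn (fun x => π x * f x) S :=
    fun hν hν_pos => Integrable.of_integral_ne_zero (hν ▸ hν_pos.ne')
  have hQ_split : Q = ν1 • Q1 + ν2 • Q2 := by
    rw [smul_eq_momentMatrix hν1_pos.ne' hQ1, smul_eq_momentMatrix hν2_pos.ne' hQ2,
      ← momentMatrix_add isCompact_Icc (hint hν1 hν1_pos) (hint hν2 hν2_pos), hQ_def]
    simp only [← add_mul, hπ_sum, one_mul]
    rfl
  refine ⟨fun x _ => ?_, fun h1 h2 x _ => ?_⟩
  · simp only [div_eq_mul_inv, mul_smul]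
    rw [← inv_smul_of_ne_zero_s2 Q1 hν1_pos.ne' hQ1_pos.det_pos.ne'.isUnit,
      ← inv_smul_of_ne_zero_s2 Q2 hν2_pos.ne' hQ2_pos.det_pos.ne'.isUnit, hQ_split]
    exact (hQ1_pos.smul hν1_pos).sq_add_mul_dotProduct_inv_add_le (hQ2_pos.smul hν2_pos)
      hσ1.ne' hσ2.ne' _
  · subst h1 h2
    have hν1' : ν1 = σ1 / (σ1 + σ2) := by rw [hν1, integral_const_mul, hf_density, mul_one]
    have hν2' : ν2 = σ2 / (σ1 + σ2) := by rw [hν2, integral_const_mul, hf_density, mul_one]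
    subst hν1' hν2'
    rw [eq_momentMatrix_of_const (by positivity) hQ1, eq_momentMatrix_of_const (by positivity) hQ2,
      ← hQ_def, ← add_smul, smul_mulVec, dotProduct_smul, smul_eq_mul]
    congr 1
    field_simp

/-- In the two-treatment linear-model setting, the variance function
`V_π(x) = (1,xᵀ)(Σ₁+Σ₂)(1,xᵀ)ᵀ` satisfies
`V_π(x) ≥ (σ₁+σ₂)² (1,xᵀ) Q⁻¹ (1,xᵀ)ᵀ` for every `x ∈ [0,1]^p`, and the
constant allocation `π₁ ≡ σ₁/(σ₁+σ₂)`, `π₂ ≡ σ₂/(σ₁+σ₂)` attains this bound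
uniformly in `x`. -/
theorem variance_uniformly_minimized
    (p : ℕ) (hp : 1 ≤ p)
    (f π1 π2 : (Fin p → ℝ) → ℝ) (σ1 σ2 : ℝ)
    (hσ1 : 0 < σ1) (hσ2 : 0 < σ2)
    (hf_meas : Measurable f) (hf_nonneg : ∀ x, 0 ≤ f x)
    (hf_bdd : ∃ C, ∀ x, f x ≤ C)
    (hf_density : ∫ x in Set.Icc (0 : Fin p → ℝ) 1, f x = 1)
    (hπ1_meas : Measurable π1) (hπ2_meas : Measurable π2)
    (hπ1_range : ∀ x, π1 x ∈ Set.Icc (0 : ℝ) 1)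
    (hπ2_range : ∀ x, π2 x ∈ Set.Icc (0 : ℝ) 1)
    (hπ_sum : ∀ x, π1 x + π2 x = 1)
    (ν1 ν2 : ℝ)
    (hν1 : ν1 = ∫ x in Set.Icc (0 : Fin p → ℝ) 1, π1 x * f x)
    (hν2 : ν2 = ∫ x in Set.Icc (0 : Fin p → ℝ) 1, π2 x * f x)
    (hν1_pos : 0 < ν1) (hν2_pos : 0 < ν2)
    (Q1 Q2 Q : Matrix (Fin (p + 1)) (Fin (p + 1)) ℝ)
    (hQ1 : ∀ i j, Q1 i j =
      (1 / ν1) * ∫ x in Set.Icc (0 : Fin p → ℝ) 1,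
        feat x i * feat x j * π1 x * f x)
    (hQ2 : ∀ i j, Q2 i j =
      (1 / ν2) * ∫ x in Set.Icc (0 : Fin p → ℝ) 1,
        feat x i * feat x j * π2 x * f x)
    (hQ : ∀ i j, Q i j =
      ∫ x in Set.Icc (0 : Fin p → ℝ) 1, feat x i * feat x j * f x)
    (hQ1_pos : Q1.PosDef) (hQ2_pos : Q2.PosDef) (hQ_pos : Q.PosDef) :
    (∀ x ∈ Set.Icc (0 : Fin p → ℝ) 1,
      (σ1 + σ2) ^ 2 * (feat x ⬝ᵥ (Q⁻¹ *ᵥ feat x)) ≤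
        feat x ⬝ᵥ (((σ1 ^ 2 / ν1) • Q1⁻¹ + (σ2 ^ 2 / ν2) • Q2⁻¹) *ᵥ feat x))
    ∧ ((π1 = fun _ => σ1 / (σ1 + σ2)) → (π2 = fun _ => σ2 / (σ1 + σ2)) →
      ∀ x ∈ Set.Icc (0 : Fin p → ℝ) 1,
        feat x ⬝ᵥ (((σ1 ^ 2 / ν1) • Q1⁻¹ + (σ2 ^ 2 / ν2) • Q2⁻¹) *ᵥ feat x) =
        (σ1 + σ2) ^ 2 * (feat x ⬝ᵥ (Q⁻¹ *ᵥ feat x))) :=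
  variance_uniformly_minimized_general p f π1 π2 σ1 σ2 hσ1 hσ2 hf_density hπ_sum ν1 ν2 hν1 hν2
    hν1_pos hν2_pos Q1 Q2 Q hQ1 hQ2 hQ hQ1_pos hQ2_pos
end

section
/- Let θ ∈ (0,1] and b > 0, let V : [0,1] → ℝ be continuous with V(x) > 0 for all x, and let f : [0,1] → ℝ be nonnegative, bounded, measurable, and continuous at θ. Then lim_{t→∞} t · ∫₀^θ Φ(−√t · b·(θ−x)/√V(x)) · b·(θ−x) · f(x) dx = f(θ)·V(θ)/(4b). -/
open MeasureTheory Filter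

/-- Standard normal cumulative distribution function `Φ`. -/
noncomputable def stdNormalCDF (x : ℝ) : ℝ :=
  ∫ t in Set.Iic x, Real.exp (-t ^ 2 / 2) / Real.sqrt (2 * Real.pi)

/-!
Substituting `s = √t (θ - x)` turns `t` times the integral into
`∫₀^{√t θ} Φ(-b s / √V(θ - s/√t)) b s f(θ - s/√t) ds`. Its integrand tends to
`Φ(-b s / √V(θ)) b s f(θ)` and is dominated by `C Φ(-b s / √M) b s`, where `C` and `M` bound `f`
and `V`. By dominated convergence and scaling, the limit is `f(θ) V(θ) / b` times
`∫₀^∞ u Φ(-u) du = 1/4`, which is read off the primitive `(u² Φ(-u) - u φ(u) + Φ(u)) / 2`: it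
tends to `1/2` thanks to the tail bound `Φ(-u) ≤ φ(u)` for `u ≥ 1`.
-/

open Set Topology

noncomputable def stdNormalPDF (x : ℝ) : ℝ := Real.exp (-x ^ 2 / 2) / Real.sqrt (2 * Real.pi)

lemma stdNormalCDF_eq_integral (x : ℝ) : stdNormalCDF x = ∫ t in Iic x, stdNormalPDF t := rfl

lemma stdNormalPDF_eq (x : ℝ) :
    stdNormalPDF x = (Real.sqrt (2 * Real.pi))⁻¹ * Real.exp (-(1 / 2) * x ^ 2) := by
  rw [stdNormalPDF]; ring_nf

lemma stdNormalPDF_pos (x : ℝ) : 0 < stdNormalPDF x := by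
  unfold stdNormalPDF; positivity

lemma stdNormalPDF_neg (x : ℝ) : stdNormalPDF (-x) = stdNormalPDF x := by
  simp [stdNormalPDF]

lemma continuous_stdNormalPDF : Continuous stdNormalPDF := by
  unfold stdNormalPDF; fun_prop

lemma integrable_stdNormalPDF : Integrable stdNormalPDF := by
  simp only [funext stdNormalPDF_eq]
  exact (integrable_exp_neg_mul_sq (by norm_num)).const_mul _

lemma integral_stdNormalPDF : ∫ x, stdNormalPDF x = 1 := by
  simp only [stdNormalPDF_eq]
  rw [integral_const_mul, integral_gaussian, show Real.pi / (1 / 2) = 2 * Real.pi by ring,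
    inv_mul_cancel₀ (by positivity)]

lemma hasDerivAt_stdNormalPDF (x : ℝ) : HasDerivAt stdNormalPDF (-x * stdNormalPDF x) x := by
  have h : HasDerivAt (fun x : ℝ => -x ^ 2 / 2) (-x) x :=
    ((hasDerivAt_pow 2 x).neg.div_const 2).congr_deriv (by ring)
  exact (h.exp.div_const _).congr_deriv (by simp only [stdNormalPDF]; ring)

lemma tendsto_pow_mul_stdNormalPDF_atTop (n : ℕ) :
    Tendsto (fun x => x ^ n * stdNormalPDF x) atTop (𝓝 0) := by
  have h := ((tendsto_rpow_abs_mul_exp_neg_mul_sq_cocompact (a := 1 / 2) (by norm_num) n).mono_left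
    atTop_le_cocompact).const_mul (Real.sqrt (2 * Real.pi))⁻¹
  rw [mul_zero] at h
  refine h.congr' ?_
  filter_upwards [eventually_ge_atTop 0] with x hx
  rw [abs_of_nonneg hx, Real.rpow_natCast, stdNormalPDF_eq]
  ring

lemma stdNormalCDF_neg (x : ℝ) : stdNormalCDF (-x) = ∫ t in Ioi x, stdNormalPDF t := by
  rw [stdNormalCDF_eq_integral, ← integral_comp_neg_Ioi]
  simp only [stdNormalPDF_neg]

lemma stdNormalCDF_add_stdNormalCDF_neg (x : ℝ) : stdNormalCDF x + stdNormalCDF (-x) = 1 := by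
  rw [stdNormalCDF_neg, stdNormalCDF_eq_integral, ← setIntegral_union (Iic_disjoint_Ioi le_rfl)
    measurableSet_Ioi integrable_stdNormalPDF.integrableOn integrable_stdNormalPDF.integrableOn,
    Iic_union_Ioi, Measure.restrict_univ, integral_stdNormalPDF]

lemma stdNormalCDF_zero : stdNormalCDF 0 = 1 / 2 := by
  linarith [neg_zero (G := ℝ) ▸ stdNormalCDF_add_stdNormalCDF_neg 0]

lemma stdNormalCDF_nonneg (x : ℝ) : 0 ≤ stdNormalCDF x :=
  setIntegral_nonneg measurableSet_Iic fun t _ => (stdNormalPDF_pos t).le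

lemma stdNormalCDF_sub_stdNormalCDF (x y : ℝ) :
    stdNormalCDF y - stdNormalCDF x = ∫ t in x..y, stdNormalPDF t :=
  intervalIntegral.integral_Iic_sub_Iic integrable_stdNormalPDF.integrableOn
    integrable_stdNormalPDF.integrableOn

lemma monotone_stdNormalCDF : Monotone stdNormalCDF := fun x y hxy => by
  have : 0 ≤ ∫ t in x..y, stdNormalPDF t :=
    intervalIntegral.integral_nonneg hxy fun t _ => (stdNormalPDF_pos t).le
  linarith [stdNormalCDF_sub_stdNormalCDF x y]

lemma hasDerivAt_stdNormalCDF (x : ℝ) : HasDerivAt stdNormalCDF (stdNormalPDF x) x := by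
  have h : HasDerivAt (fun y => stdNormalCDF 0 + ∫ t in (0 : ℝ)..y, stdNormalPDF t)
      (stdNormalPDF x) x :=
    (intervalIntegral.integral_hasDerivAt_right integrable_stdNormalPDF.intervalIntegrable
      (continuous_stdNormalPDF.stronglyMeasurableAtFilter _ _)
      continuous_stdNormalPDF.continuousAt).const_add _
  refine h.congr_of_eventuallyEq (Eventually.of_forall fun y => ?_)
  linarith [stdNormalCDF_sub_stdNormalCDF 0 y]

lemma continuous_stdNormalCDF : Continuous stdNormalCDF :=
  continuous_iff_continuousAt.2 fun x => (hasDerivAt_stdNormalCDF x).continuousAt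

lemma tendsto_stdNormalCDF_atTop : Tendsto stdNormalCDF atTop (𝓝 1) :=
  integral_stdNormalPDF ▸
    (aecover_Iic (μ := volume) tendsto_id).integral_tendsto_of_countably_generated
      integrable_stdNormalPDF

lemma integral_Ioi_mul_stdNormalPDF {x : ℝ} (hx : 0 ≤ x) :
    IntegrableOn (fun t => t * stdNormalPDF t) (Ioi x) ∧
      ∫ t in Ioi x, t * stdNormalPDF t = stdNormalPDF x := by
  have hderiv : ∀ t ∈ Ioi x, HasDerivAt (fun t => -stdNormalPDF t) (t * stdNormalPDF t) t :=
    fun t _ => (hasDerivAt_stdNormalPDF t).neg.congr_deriv (by ring)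
  have hnonneg : ∀ t ∈ Ioi x, 0 ≤ t * stdNormalPDF t :=
    fun t ht => mul_nonneg (hx.trans ht.out.le) (stdNormalPDF_pos t).le
  have hlim : Tendsto (fun t => -stdNormalPDF t) atTop (𝓝 0) := by
    simpa using (tendsto_pow_mul_stdNormalPDF_atTop 0).neg
  have hcont : ContinuousWithinAt (fun t => -stdNormalPDF t) (Ici x) x :=
    continuous_stdNormalPDF.neg.continuousWithinAt
  refine ⟨integrableOn_Ioi_deriv_of_nonneg hcont hderiv hnonneg hlim, ?_⟩
  rw [integral_Ioi_of_hasDerivAt_of_nonneg hcont hderiv hnonneg hlim]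
  ring

lemma stdNormalCDF_neg_le_stdNormalPDF {x : ℝ} (hx : 1 ≤ x) :
    stdNormalCDF (-x) ≤ stdNormalPDF x := by
  obtain ⟨hint, hval⟩ := integral_Ioi_mul_stdNormalPDF (zero_le_one.trans hx)
  rw [stdNormalCDF_neg, ← hval]
  refine setIntegral_mono_on integrable_stdNormalPDF.integrableOn hint measurableSet_Ioi
    fun t ht => ?_
  nlinarith [stdNormalPDF_pos t, ht.out]

lemma tendsto_sq_mul_stdNormalCDF_neg_atTop :
    Tendsto (fun x => x ^ 2 * stdNormalCDF (-x)) atTop (𝓝 0) := by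
  refine squeeze_zero' ?_ ?_ (tendsto_pow_mul_stdNormalPDF_atTop 2)
  · filter_upwards with x
    exact mul_nonneg (sq_nonneg x) (stdNormalCDF_nonneg _)
  · filter_upwards [eventually_ge_atTop 1] with x hx
    exact mul_le_mul_of_nonneg_left (stdNormalCDF_neg_le_stdNormalPDF hx) (sq_nonneg x)

lemma integral_Ioi_mul_stdNormalCDF_neg :
    IntegrableOn (fun x => x * stdNormalCDF (-x)) (Ioi 0) ∧
      ∫ x in Ioi (0 : ℝ), x * stdNormalCDF (-x) = 1 / 4 := by
  set H : ℝ → ℝ := fun x =>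
    (x ^ 2 * stdNormalCDF (-x) - x * stdNormalPDF x + stdNormalCDF x) / 2
  have hderiv : ∀ x, HasDerivAt H (x * stdNormalCDF (-x)) x := by
    intro x
    have hneg : HasDerivAt (fun x => stdNormalCDF (-x)) (-stdNormalPDF x) x :=
      ((hasDerivAt_stdNormalCDF (-x)).comp x (hasDerivAt_neg x)).congr_deriv
        (by rw [stdNormalPDF_neg]; ring)
    have := ((((hasDerivAt_pow 2 x).mul hneg).sub ((hasDerivAt_id x).mul
      (hasDerivAt_stdNormalPDF x))).add (hasDerivAt_stdNormalCDF x)).div_const 2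
    exact this.congr_deriv (by simp only [id]; ring)
  have hlim : Tendsto H atTop (𝓝 (1 / 2)) := by
    have := ((tendsto_sq_mul_stdNormalCDF_neg_atTop.sub
      (tendsto_pow_mul_stdNormalPDF_atTop 1)).add tendsto_stdNormalCDF_atTop).div_const 2
    simpa using this
  have hH0 : H 0 = 1 / 4 := by
    simp only [H, stdNormalCDF_zero]; norm_num
  have hnonneg : ∀ x ∈ Ioi (0 : ℝ), 0 ≤ x * stdNormalCDF (-x) :=
    fun x hx => mul_nonneg hx.out.le (stdNormalCDF_nonneg _)
  have hcont : ContinuousWithinAt H (Ici 0) 0 := (hderiv 0).continuousAt.continuousWithinAt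
  refine ⟨integrableOn_Ioi_deriv_of_nonneg hcont (fun x _ => hderiv x) hnonneg hlim, ?_⟩
  rw [integral_Ioi_of_hasDerivAt_of_nonneg hcont (fun x _ => hderiv x) hnonneg hlim, hH0]
  norm_num

lemma integral_Ioi_stdNormalCDF_neg_div_mul {b σ : ℝ} (hb : 0 < b) (hσ : 0 < σ) :
    IntegrableOn (fun s => stdNormalCDF (-(b * s) / σ) * (b * s)) (Ioi 0) ∧
      ∫ s in Ioi (0 : ℝ), stdNormalCDF (-(b * s) / σ) * (b * s) = σ ^ 2 / (4 * b) := by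
  obtain ⟨hint, hval⟩ := integral_Ioi_mul_stdNormalCDF_neg
  set g : ℝ → ℝ := fun x => σ * (x * stdNormalCDF (-x))
  have hg : (fun s => stdNormalCDF (-(b * s) / σ) * (b * s)) = fun s => g (b / σ * s) := by
    ext s
    simp only [g]
    rw [neg_div, mul_div_right_comm]
    field_simp
  have ha : 0 < b / σ := div_pos hb hσ
  rw [hg, integrableOn_Ioi_comp_mul_left_iff g 0 ha, integral_comp_mul_left_Ioi g 0 ha, mul_zero]
  refine ⟨hint.const_mul σ, ?_⟩
  rw [smul_eq_mul, integral_const_mul, hval]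
  field_simp

lemma mul_integral_comp_mul_sub_eq (k : ℝ → ℝ → ℝ) {θ r : ℝ} (hθ : 0 ≤ θ) (hr : 0 < r) :
    r * ∫ x in (0 : ℝ)..θ, k (r * (θ - x)) x =
      ∫ s in Ioi 0, (Ioc 0 (r * θ)).indicator (fun s => k s (θ - s / r)) s := by
  set h : ℝ → ℝ := fun s => k s (θ - s / r)
  have hk : ∀ x, k (r * (θ - x)) x = h (r * θ - r * x) := fun x => by
    rw [← mul_sub]
    simp only [h, mul_div_cancel_left₀ _ hr.ne', sub_sub_cancel]
  rw [intervalIntegral.integral_congr fun x _ => hk x,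
    intervalIntegral.integral_comp_sub_mul h hr.ne', sub_self, mul_zero, sub_zero, smul_eq_mul,
    mul_inv_cancel_left₀ hr.ne', intervalIntegral.integral_of_le (by positivity),
    integral_indicator measurableSet_Ioc, Measure.restrict_restrict measurableSet_Ioc,
    inter_eq_left.2 Ioc_subset_Ioi_self]

theorem tendsto_mul_integral_comp_mul_sub {k : ℝ → ℝ → ℝ} {G : ℝ → ℝ} {θ : ℝ} (hθ : 0 < θ)
    (hk_meas : Measurable (Function.uncurry k))
    (hk_le : ∀ s > 0, ∀ x ∈ Icc 0 θ, ‖k s x‖ ≤ G s) (hG : IntegrableOn G (Ioi 0))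
    (hk_cont : ∀ s > 0, ContinuousWithinAt (k s) (Icc 0 θ) θ) :
    Tendsto (fun r => r * ∫ x in (0 : ℝ)..θ, k (r * (θ - x)) x) atTop
      (𝓝 (∫ s in Ioi 0, k s θ)) := by
  have hmem : ∀ r > 0, ∀ s ∈ Ioc 0 (r * θ), θ - s / r ∈ Icc 0 θ := fun r hr s hs => by
    have : s / r ≤ θ := (div_le_iff₀ hr).2 (by linarith [hs.2])
    have : 0 < s / r := div_pos hs.1 hr
    constructor <;> linarith
  refine Tendsto.congr' (EventuallyEq.symm ?_) (tendsto_integral_filter_of_dominated_convergence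
    (F := fun r s => (Ioc 0 (r * θ)).indicator (fun s => k s (θ - s / r)) s) G ?_ ?_ hG ?_)
  · filter_upwards [eventually_gt_atTop 0] with r hr
    exact mul_integral_comp_mul_sub_eq k hθ.le hr
  · filter_upwards with r
    refine (Measurable.indicator ?_ measurableSet_Ioc).aestronglyMeasurable
    exact hk_meas.comp (measurable_id.prodMk (measurable_const.sub (measurable_id.div_const r)))
  · filter_upwards [eventually_gt_atTop 0] with r hr
    filter_upwards [ae_restrict_mem measurableSet_Ioi] with s hs
    by_cases hsr : s ∈ Ioc 0 (r * θ)
    · rw [indicator_of_mem hsr]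
      exact hk_le s hs _ (hmem r hr s hsr)
    · rw [indicator_of_notMem hsr, norm_zero]
      exact (norm_nonneg _).trans (hk_le s hs θ (right_mem_Icc.2 hθ.le))
  · filter_upwards [ae_restrict_mem measurableSet_Ioi] with s hs
    have hlarge : ∀ᶠ r in atTop, 0 < r ∧ s ∈ Ioc 0 (r * θ) := by
      filter_upwards [eventually_gt_atTop 0, (tendsto_id.atTop_mul_const hθ).eventually_ge_atTop s]
        with r hr hsr
      exact ⟨hr, hs, hsr⟩
    have hpt : Tendsto (fun r => θ - s / r) atTop (𝓝[Icc 0 θ] θ) := by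
      refine tendsto_nhdsWithin_iff.2 ⟨?_, ?_⟩
      · simpa using tendsto_const_nhds.sub (tendsto_const_nhds.div_atTop (tendsto_id (α := ℝ)))
      · filter_upwards [hlarge] with r hr
        exact hmem r hr.1 s hr.2
    refine ((hk_cont s hs).tendsto.comp hpt).congr' ?_
    filter_upwards [hlarge] with r hr
    rw [indicator_of_mem hr.2]
    rfl

-- `regretKernel b V f (√t (θ - x)) x` is `√t` times the integrand of `regret_half_limit`.
noncomputable def regretKernel (b : ℝ) (V f : ℝ → ℝ) (s x : ℝ) : ℝ :=
  stdNormalCDF (-(b * s) / Real.sqrt (V x)) * (b * s) * f x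

lemma measurable_uncurry_regretKernel {V f : ℝ → ℝ} (hV : Measurable V) (hf : Measurable f)
    (b : ℝ) : Measurable (Function.uncurry (regretKernel b V f)) := by
  unfold regretKernel
  have := continuous_stdNormalCDF.measurable
  fun_prop

lemma continuousWithinAt_regretKernel {V f : ℝ → ℝ} {S : Set ℝ} {θ : ℝ}
    (hV : ContinuousWithinAt V S θ) (hVθ : 0 < V θ) (hf : ContinuousWithinAt f S θ) (b s : ℝ) :
    ContinuousWithinAt (regretKernel b V f s) S θ :=
  ((continuous_stdNormalCDF.continuousAt.comp_continuousWithinAt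
    (continuousWithinAt_const.div hV.sqrt (Real.sqrt_pos.2 hVθ).ne')).mul
      continuousWithinAt_const).mul hf

lemma norm_regretKernel_le {V f : ℝ → ℝ} {b s x M C : ℝ} (hb : 0 ≤ b) (hs : 0 ≤ s)
    (hVx : 0 < V x) (hVM : V x ≤ M) (hfx : 0 ≤ f x) (hfC : f x ≤ C) :
    ‖regretKernel b V f s x‖ ≤ C * (stdNormalCDF (-(b * s) / Real.sqrt M) * (b * s)) := by
  have hbs : 0 ≤ b * s := mul_nonneg hb hs
  have hΦ : stdNormalCDF (-(b * s) / Real.sqrt (V x)) ≤ stdNormalCDF (-(b * s) / Real.sqrt M) := by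
    refine monotone_stdNormalCDF ?_
    rw [neg_div, neg_div, neg_le_neg_iff]
    exact div_le_div_of_nonneg_left hbs (Real.sqrt_pos.2 hVx) (Real.sqrt_le_sqrt hVM)
  have hΦ0 := stdNormalCDF_nonneg (-(b * s) / Real.sqrt (V x))
  rw [regretKernel, Real.norm_of_nonneg (mul_nonneg (mul_nonneg hΦ0 hbs) hfx), mul_comm C]
  exact mul_le_mul (mul_le_mul_of_nonneg_right hΦ hbs) hfC hfx
    (mul_nonneg (stdNormalCDF_nonneg _) hbs)

lemma integral_regretKernel {V f : ℝ → ℝ} {b θ : ℝ} (hb : 0 < b) (hVθ : 0 < V θ) :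
    ∫ s in Ioi (0 : ℝ), regretKernel b V f s θ = f θ * V θ / (4 * b) := by
  simp only [regretKernel]
  rw [integral_mul_const, (integral_Ioi_stdNormalCDF_neg_div_mul hb (Real.sqrt_pos.2 hVθ)).2,
    Real.sq_sqrt hVθ.le]
  ring

lemma mul_integral_eq_sqrt_mul_integral_regretKernel {V W f : ℝ → ℝ} {b θ t : ℝ} (hθ : 0 ≤ θ)
    (ht : 0 ≤ t) (hVW : EqOn W V (Icc 0 θ)) :
    t * ∫ x in (0 : ℝ)..θ, stdNormalCDF (-(Real.sqrt t * (b * (θ - x))) / Real.sqrt (V x)) *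
        (b * (θ - x)) * f x =
      Real.sqrt t * ∫ x in (0 : ℝ)..θ, regretKernel b W f (Real.sqrt t * (θ - x)) x := by
  have hk : EqOn (fun x => regretKernel b W f (Real.sqrt t * (θ - x)) x)
      (fun x => Real.sqrt t * (stdNormalCDF (-(Real.sqrt t * (b * (θ - x))) / Real.sqrt (V x)) *
        (b * (θ - x)) * f x)) (uIcc 0 θ) := fun x hx => by
    rw [uIcc_of_le hθ] at hx
    simp only [regretKernel, hVW hx, mul_left_comm b]
    ring
  rw [intervalIntegral.integral_congr hk, intervalIntegral.integral_const_mul, ← mul_assoc,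
    Real.mul_self_sqrt ht]

/-- `lim_{t→∞} t ∫₀^θ Φ(−√t b(θ−x)/√V(x)) b(θ−x) f(x) dx = f(θ)V(θ)/(4b)`. -/
theorem regret_half_limit
    (θ b : ℝ) (hθ : θ ∈ Set.Ioc (0 : ℝ) 1) (hb : 0 < b)
    (V f : ℝ → ℝ)
    (hV_cont : ContinuousOn V (Set.Icc 0 1))
    (hV_pos : ∀ x ∈ Set.Icc (0 : ℝ) 1, 0 < V x)
    (hf_nonneg : ∀ x ∈ Set.Icc (0 : ℝ) 1, 0 ≤ f x)
    (hf_bdd : ∃ C, ∀ x ∈ Set.Icc (0 : ℝ) 1, f x ≤ C)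
    (hf_meas : Measurable f)
    (hf_cont : ContinuousWithinAt f (Set.Icc 0 1) θ) :
    Tendsto (fun t : ℝ => t * ∫ x in (0 : ℝ)..θ,
        stdNormalCDF (-(Real.sqrt t * (b * (θ - x))) / Real.sqrt (V x)) *
          (b * (θ - x)) * f x)
      atTop (nhds (f θ * V θ / (4 * b))) := by
  obtain ⟨hθ0, hθ1⟩ := hθ
  have hθI : θ ∈ Icc (0 : ℝ) 1 := ⟨hθ0.le, hθ1⟩
  have hsub : Icc 0 θ ⊆ Icc (0 : ℝ) 1 := Icc_subset_Icc_right hθ1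
  obtain ⟨C, hC⟩ := hf_bdd
  obtain ⟨M, hM⟩ := isCompact_Icc.exists_bound_of_continuousOn hV_cont
  -- a continuous extension of `V` off `[0, 1]`, so that the kernel is jointly measurable
  set W := IccExtend zero_le_one ((Icc 0 1).domRestrict V)
  have hW_cont : Continuous W := continuous_IccExtend_iff.2 hV_cont.domRestrict
  have hW_eq : EqOn W V (Icc 0 1) := fun x hx => IccExtend_of_mem _ _ hx
  have hW_range : ∀ x, ∃ y ∈ Icc (0 : ℝ) 1, V y = W x :=
    fun x => ⟨_, (projIcc 0 1 zero_le_one x).2, rfl⟩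
  have hW_pos : ∀ x, 0 < W x := fun x => by
    obtain ⟨y, hy, hyx⟩ := hW_range x; exact hyx ▸ hV_pos y hy
  have hW_le : ∀ x, W x ≤ M := fun x => by
    obtain ⟨y, hy, hyx⟩ := hW_range x; exact hyx ▸ (le_abs_self _).trans (hM y hy)
  have hlim := tendsto_mul_integral_comp_mul_sub hθ0
    (measurable_uncurry_regretKernel hW_cont.measurable hf_meas b)
    (fun s hs x hx => norm_regretKernel_le hb.le hs.le (hW_pos x) (hW_le x)
      (hf_nonneg x (hsub hx)) (hC x (hsub hx)))
    ((integral_Ioi_stdNormalCDF_neg_div_mul hb (Real.sqrt_pos.2 ((hW_pos θ).trans_le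
      (hW_le θ)))).1.const_mul C)
    (fun s _ => continuousWithinAt_regretKernel hW_cont.continuousWithinAt (hW_pos θ)
      (hf_cont.mono hsub) b s)
  rw [integral_regretKernel hb (hW_pos θ), hW_eq hθI] at hlim
  refine (hlim.comp Real.tendsto_sqrt_atTop).congr' ?_
  filter_upwards [eventually_ge_atTop 0] with t ht
  exact (mul_integral_eq_sqrt_mul_integral_regretKernel hθ0.le ht (hW_eq.mono hsub)).symm
end

section
/- For every x ∈ [0,1] one has V_π(x) ≥ (σ₁+σ₂)² · h(x)ᵀ Q⁻¹ h(x); that is, in the polynomial regression setting, V_π(x) is minimized uniformly in x by the constant allocation π₁(x) ≡ σ₁/(σ₁+σ₂), π₂(x) ≡ σ₂/(σ₁+σ₂), for which V_π(x) = (σ₁+σ₂)² · h(x)ᵀ Q⁻¹ h(x) for all x. -/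
/-!
For positive definite `M`, `hᵀ M⁻¹ h ≥ 2 wᵀh - wᵀ M w` for every `w`, with equality at
`w = M⁻¹ h`. Since `π₁ + π₂ = 1`, `Q = ν₁ Q₁ + ν₂ Q₂`; let `u = Q⁻¹ h`. The bound for `Q_k` at the
vector `σ_k h` and `w = ν_k (σ₁ + σ₂) u` gives
`(σ_k² / ν_k) hᵀ Q_k⁻¹ h ≥ 2 σ_k (σ₁ + σ₂) uᵀh - ν_k (σ₁ + σ₂)² uᵀ Q_k u`, and summing over `k`
the right-hand sides add up to `(σ₁ + σ₂)² uᵀ Q u = (σ₁ + σ₂)² hᵀ Q⁻¹ h`.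
For a constant allocation each `Q_k` is a multiple of `Q`, and the bound is attained.
-/

open Matrix MeasureTheory

/-- The polynomial feature map `h(x) = (1, x, x², …, x^J)ᵀ ∈ ℝ^{J+1}`. -/
def polyFeat (J : ℕ) (x : ℝ) : Fin (J + 1) → ℝ := fun j => x ^ (j : ℕ)

namespace Matrix

variable {n : Type*} [Fintype n] [DecidableEq n]

theorem PosDef.mulVec_inv_mulVec {M : Matrix n n ℝ} (hM : M.PosDef) (v : n → ℝ) :
    M *ᵥ (M⁻¹ *ᵥ v) = v := by
  rw [mulVec_mulVec, mul_nonsing_inv _ ((isUnit_iff_isUnit_det _).mp hM.isUnit), one_mulVec]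

theorem PosDef.two_mul_dotProduct_sub_le {M : Matrix n n ℝ} (hM : M.PosDef) (h w : n → ℝ) :
    2 * (w ⬝ᵥ h) - w ⬝ᵥ (M *ᵥ w) ≤ h ⬝ᵥ (M⁻¹ *ᵥ h) := by
  set v := M⁻¹ *ᵥ h
  have hv : M *ᵥ v = h := hM.mulVec_inv_mulVec h
  have hsymm : v ⬝ᵥ (M *ᵥ w) = w ⬝ᵥ h := by
    rw [dotProduct_mulVec, ← mulVec_transpose, ← conjTranspose_eq_transpose_of_trivial,
      hM.isHermitian.eq, hv, dotProduct_comm]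
  have hnonneg := hM.posSemidef.dotProduct_mulVec_nonneg (w - v)
  simp only [star_trivial, mulVec_sub, dotProduct_sub, sub_dotProduct, hv, hsymm] at hnonneg
  rw [dotProduct_comm h]
  linarith

theorem PosDef.le_sq_div_mul_dotProduct_inv {M : Matrix n n ℝ} (hM : M.PosDef) {ν : ℝ}
    (hν : 0 < ν) (σ τ : ℝ) (h u : n → ℝ) :
    2 * σ * τ * (u ⬝ᵥ h) - ν * τ ^ 2 * (u ⬝ᵥ (M *ᵥ u)) ≤ σ ^ 2 / ν * (h ⬝ᵥ (M⁻¹ *ᵥ h)) := by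
  have key := hM.two_mul_dotProduct_sub_le (σ • h) ((ν * τ) • u)
  simp only [mulVec_smul, dotProduct_smul, smul_dotProduct, smul_eq_mul] at key
  rw [div_mul_eq_mul_div, le_div_iff₀ hν]
  linear_combination key

theorem sq_add_mul_dotProduct_inv_le {Q₁ Q₂ : Matrix n n ℝ} (hQ₁ : Q₁.PosDef) (hQ₂ : Q₂.PosDef)
    {ν₁ ν₂ : ℝ} (hν₁ : 0 < ν₁) (hν₂ : 0 < ν₂) (σ₁ σ₂ : ℝ) (h : n → ℝ) :
    (σ₁ + σ₂) ^ 2 * (h ⬝ᵥ ((ν₁ • Q₁ + ν₂ • Q₂)⁻¹ *ᵥ h)) ≤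
      h ⬝ᵥ (((σ₁ ^ 2 / ν₁) • Q₁⁻¹ + (σ₂ ^ 2 / ν₂) • Q₂⁻¹) *ᵥ h) := by
  have hQ : (ν₁ • Q₁ + ν₂ • Q₂).PosDef := (hQ₁.smul hν₁).add (hQ₂.smul hν₂)
  set u := (ν₁ • Q₁ + ν₂ • Q₂)⁻¹ *ᵥ h
  have hu : (ν₁ • Q₁ + ν₂ • Q₂) *ᵥ u = h := hQ.mulVec_inv_mulVec h
  have hsplit : ν₁ * (u ⬝ᵥ (Q₁ *ᵥ u)) + ν₂ * (u ⬝ᵥ (Q₂ *ᵥ u)) = u ⬝ᵥ h := by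
    rw [← hu]
    simp only [add_mulVec, smul_mulVec, dotProduct_add, dotProduct_smul, smul_eq_mul]
  have h₁ := hQ₁.le_sq_div_mul_dotProduct_inv hν₁ σ₁ (σ₁ + σ₂) h u
  have h₂ := hQ₂.le_sq_div_mul_dotProduct_inv hν₂ σ₂ (σ₁ + σ₂) h u
  rw [dotProduct_comm h]
  simp only [add_mulVec, smul_mulVec, dotProduct_add, dotProduct_smul, smul_eq_mul]
  linear_combination h₁ + h₂ + (σ₁ + σ₂) ^ 2 * hsplit

theorem inv_eq_smul_inv_of_smul_eq {P Q : Matrix n n ℝ} (hQ : IsUnit Q.det) {ν c : ℝ}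
    (hν : ν ≠ 0) (hc : c ≠ 0) (h : ν • P = c • Q) : P⁻¹ = (ν / c) • Q⁻¹ := by
  have hP : P = (c / ν) • Q := by
    rw [div_eq_inv_mul, mul_smul, ← h, smul_smul, inv_mul_cancel₀ hν, one_smul]
  rw [hP]
  simpa only [Units.smul_def, Units.val_inv_eq_inv_val, Units.val_mk0, inv_div] using
    inv_smul' Q (Units.mk0 (c / ν) (div_ne_zero hc hν)) hQ

theorem sq_div_smul_inv_add_sq_div_smul_inv_eq {Q₁ Q₂ Q : Matrix n n ℝ} (hQ : IsUnit Q.det)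
    {σ₁ σ₂ ν₁ ν₂ : ℝ} (hσ₁ : σ₁ ≠ 0) (hσ₂ : σ₂ ≠ 0) (hσ : σ₁ + σ₂ ≠ 0) (hν₁ : ν₁ ≠ 0)
    (hν₂ : ν₂ ≠ 0) (h₁ : ν₁ • Q₁ = (σ₁ / (σ₁ + σ₂)) • Q) (h₂ : ν₂ • Q₂ = (σ₂ / (σ₁ + σ₂)) • Q) :
    (σ₁ ^ 2 / ν₁) • Q₁⁻¹ + (σ₂ ^ 2 / ν₂) • Q₂⁻¹ = (σ₁ + σ₂) ^ 2 • Q⁻¹ := by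
  rw [inv_eq_smul_inv_of_smul_eq hQ hν₁ (div_ne_zero hσ₁ hσ) h₁,
    inv_eq_smul_inv_of_smul_eq hQ hν₂ (div_ne_zero hσ₂ hσ) h₂, smul_smul, smul_smul, ← add_smul]
  congr 1
  field_simp

end Matrix

theorem integrableOn_mul_of_mem_Icc {α : Type*} [MeasurableSpace α] {μ : Measure α} {s : Set α}
    (hs : μ s ≠ ⊤) {π f : α → ℝ} {C : ℝ} (hπ : Measurable π) (hπ01 : ∀ x, π x ∈ Set.Icc 0 1)
    (hf : Measurable f) (hf0 : ∀ x, 0 ≤ f x) (hfC : ∀ x, f x ≤ C) :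
    IntegrableOn (fun x => π x * f x) s μ := by
  refine Measure.integrableOn_of_bounded (M := C) hs (hπ.mul hf).aestronglyMeasurable
    (ae_of_all _ fun x => ?_)
  rw [norm_mul, Real.norm_of_nonneg (hπ01 x).1, Real.norm_of_nonneg (hf0 x)]
  exact (mul_le_of_le_one_left (hf0 x) (hπ01 x).2).trans (hfC x)

noncomputable def polyMoment (J : ℕ) (w : ℝ → ℝ) : Matrix (Fin (J + 1)) (Fin (J + 1)) ℝ :=
  of fun i j => ∫ x in Set.Icc (0 : ℝ) 1, polyFeat J x i * polyFeat J x j * w x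

section polyMoment

variable {J : ℕ}

theorem MeasureTheory.IntegrableOn.polyFeat_mul_polyFeat_mul {w : ℝ → ℝ}
    (hw : IntegrableOn w (Set.Icc 0 1)) (i j : Fin (J + 1)) :
    IntegrableOn (fun x => polyFeat J x i * polyFeat J x j * w x) (Set.Icc 0 1) :=
  hw.continuousOn_mul (by unfold polyFeat; fun_prop) isCompact_Icc

theorem polyMoment_add {w₁ w₂ : ℝ → ℝ} (hw₁ : IntegrableOn w₁ (Set.Icc 0 1))
    (hw₂ : IntegrableOn w₂ (Set.Icc 0 1)) :
    polyMoment J (fun x => w₁ x + w₂ x) = polyMoment J w₁ + polyMoment J w₂ := by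
  ext i j
  simp only [polyMoment, of_apply, Matrix.add_apply, mul_add]
  exact integral_add (hw₁.polyFeat_mul_polyFeat_mul i j) (hw₂.polyFeat_mul_polyFeat_mul i j)

theorem polyMoment_const_mul (c : ℝ) (w : ℝ → ℝ) :
    polyMoment J (fun x => c * w x) = c • polyMoment J w := by
  ext i j
  simp only [polyMoment, of_apply, Matrix.smul_apply, smul_eq_mul, ← integral_const_mul]
  congr 1 with x
  ring

theorem smul_eq_polyMoment {ν : ℝ} (hν : ν ≠ 0) {P : Matrix (Fin (J + 1)) (Fin (J + 1)) ℝ}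
    {π f : ℝ → ℝ} (hP : ∀ i j, P i j = (1 / ν) * ∫ x in Set.Icc (0 : ℝ) 1,
      polyFeat J x i * polyFeat J x j * π x * f x) :
    ν • P = polyMoment J (fun x => π x * f x) := by
  ext i j
  simp only [Matrix.smul_apply, smul_eq_mul, hP, polyMoment, of_apply, mul_assoc]
  field_simp

end polyMoment

theorem variance_uniformly_minimized_poly_general
    (J : ℕ)
    (f π1 π2 : ℝ → ℝ) (σ1 σ2 : ℝ)
    (hσ1 : 0 < σ1) (hσ2 : 0 < σ2)
    (hf_meas : Measurable f) (hf_nonneg : ∀ x, 0 ≤ f x)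
    (hf_bdd : ∃ C, ∀ x, f x ≤ C)
    (hπ1_meas : Measurable π1) (hπ2_meas : Measurable π2)
    (hπ1_range : ∀ x, π1 x ∈ Set.Icc (0 : ℝ) 1)
    (hπ2_range : ∀ x, π2 x ∈ Set.Icc (0 : ℝ) 1)
    (hπ_sum : ∀ x, π1 x + π2 x = 1)
    (ν1 ν2 : ℝ)
    (hν1_pos : 0 < ν1) (hν2_pos : 0 < ν2)
    (Q1 Q2 Q : Matrix (Fin (J + 1)) (Fin (J + 1)) ℝ)
    (hQ1 : ∀ i j, Q1 i j =
      (1 / ν1) * ∫ x in Set.Icc (0 : ℝ) 1,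
        polyFeat J x i * polyFeat J x j * π1 x * f x)
    (hQ2 : ∀ i j, Q2 i j =
      (1 / ν2) * ∫ x in Set.Icc (0 : ℝ) 1,
        polyFeat J x i * polyFeat J x j * π2 x * f x)
    (hQ : ∀ i j, Q i j =
      ∫ x in Set.Icc (0 : ℝ) 1, polyFeat J x i * polyFeat J x j * f x)
    (hQ1_pos : Q1.PosDef) (hQ2_pos : Q2.PosDef) (hQ_pos : Q.PosDef) :
    (∀ x ∈ Set.Icc (0 : ℝ) 1,
      (σ1 + σ2) ^ 2 * (polyFeat J x ⬝ᵥ (Q⁻¹ *ᵥ polyFeat J x)) ≤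
        polyFeat J x ⬝ᵥ
          (((σ1 ^ 2 / ν1) • Q1⁻¹ + (σ2 ^ 2 / ν2) • Q2⁻¹) *ᵥ polyFeat J x))
    ∧ ((π1 = fun _ => σ1 / (σ1 + σ2)) → (π2 = fun _ => σ2 / (σ1 + σ2)) →
      ∀ x ∈ Set.Icc (0 : ℝ) 1,
        polyFeat J x ⬝ᵥ
          (((σ1 ^ 2 / ν1) • Q1⁻¹ + (σ2 ^ 2 / ν2) • Q2⁻¹) *ᵥ polyFeat J x) =
        (σ1 + σ2) ^ 2 * (polyFeat J x ⬝ᵥ (Q⁻¹ *ᵥ polyFeat J x))) := by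
  obtain ⟨C, hfC⟩ := hf_bdd
  have hQ_moment : Q = polyMoment J f := ext hQ
  have hν1Q1 := smul_eq_polyMoment hν1_pos.ne' hQ1
  have hν2Q2 := smul_eq_polyMoment hν2_pos.ne' hQ2
  have hQ_split : ν1 • Q1 + ν2 • Q2 = Q := by
    rw [hν1Q1, hν2Q2, hQ_moment, ← polyMoment_add
      (integrableOn_mul_of_mem_Icc measure_Icc_lt_top.ne hπ1_meas hπ1_range hf_meas hf_nonneg hfC)
      (integrableOn_mul_of_mem_Icc measure_Icc_lt_top.ne hπ2_meas hπ2_range hf_meas hf_nonneg hfC)]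
    simp only [← add_mul, hπ_sum, one_mul]
  refine ⟨fun x _ => hQ_split ▸
    sq_add_mul_dotProduct_inv_le hQ1_pos hQ2_pos hν1_pos hν2_pos _ _ _, fun hπ1 hπ2 x _ => ?_⟩
  rw [hπ1, polyMoment_const_mul, ← hQ_moment] at hν1Q1
  rw [hπ2, polyMoment_const_mul, ← hQ_moment] at hν2Q2
  rw [sq_div_smul_inv_add_sq_div_smul_inv_eq ((isUnit_iff_isUnit_det _).mp hQ_pos.isUnit)
    hσ1.ne' hσ2.ne' (by positivity) hν1_pos.ne' hν2_pos.ne' hν1Q1 hν2Q2, smul_mulVec,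
    dotProduct_smul, smul_eq_mul]

/-- In the polynomial regression setting, the variance function
`V_π(x) = h(x)ᵀ(Σ₁+Σ₂)h(x)` satisfies `V_π(x) ≥ (σ₁+σ₂)² h(x)ᵀ Q⁻¹ h(x)` for
every `x ∈ [0,1]`, and the constant allocation `π₁ ≡ σ₁/(σ₁+σ₂)`,
`π₂ ≡ σ₂/(σ₁+σ₂)` attains this bound uniformly in `x`. -/
theorem variance_uniformly_minimized_poly
    (J : ℕ) (hJ : 1 ≤ J)
    (f π1 π2 : ℝ → ℝ) (σ1 σ2 : ℝ)
    (hσ1 : 0 < σ1) (hσ2 : 0 < σ2)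
    (hf_meas : Measurable f) (hf_nonneg : ∀ x, 0 ≤ f x)
    (hf_bdd : ∃ C, ∀ x, f x ≤ C)
    (hf_density : ∫ x in Set.Icc (0 : ℝ) 1, f x = 1)
    (hπ1_meas : Measurable π1) (hπ2_meas : Measurable π2)
    (hπ1_range : ∀ x, π1 x ∈ Set.Icc (0 : ℝ) 1)
    (hπ2_range : ∀ x, π2 x ∈ Set.Icc (0 : ℝ) 1)
    (hπ_sum : ∀ x, π1 x + π2 x = 1)
    (ν1 ν2 : ℝ)
    (hν1 : ν1 = ∫ x in Set.Icc (0 : ℝ) 1, π1 x * f x)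
    (hν2 : ν2 = ∫ x in Set.Icc (0 : ℝ) 1, π2 x * f x)
    (hν1_pos : 0 < ν1) (hν2_pos : 0 < ν2)
    (Q1 Q2 Q : Matrix (Fin (J + 1)) (Fin (J + 1)) ℝ)
    (hQ1 : ∀ i j, Q1 i j =
      (1 / ν1) * ∫ x in Set.Icc (0 : ℝ) 1,
        polyFeat J x i * polyFeat J x j * π1 x * f x)
    (hQ2 : ∀ i j, Q2 i j =
      (1 / ν2) * ∫ x in Set.Icc (0 : ℝ) 1,
        polyFeat J x i * polyFeat J x j * π2 x * f x)
    (hQ : ∀ i j, Q i j =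
      ∫ x in Set.Icc (0 : ℝ) 1, polyFeat J x i * polyFeat J x j * f x)
    (hQ1_pos : Q1.PosDef) (hQ2_pos : Q2.PosDef) (hQ_pos : Q.PosDef) :
    (∀ x ∈ Set.Icc (0 : ℝ) 1,
      (σ1 + σ2) ^ 2 * (polyFeat J x ⬝ᵥ (Q⁻¹ *ᵥ polyFeat J x)) ≤
        polyFeat J x ⬝ᵥ
          (((σ1 ^ 2 / ν1) • Q1⁻¹ + (σ2 ^ 2 / ν2) • Q2⁻¹) *ᵥ polyFeat J x))
    ∧ ((π1 = fun _ => σ1 / (σ1 + σ2)) → (π2 = fun _ => σ2 / (σ1 + σ2)) →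
      ∀ x ∈ Set.Icc (0 : ℝ) 1,
        polyFeat J x ⬝ᵥ
          (((σ1 ^ 2 / ν1) • Q1⁻¹ + (σ2 ^ 2 / ν2) • Q2⁻¹) *ᵥ polyFeat J x) =
        (σ1 + σ2) ^ 2 * (polyFeat J x ⬝ᵥ (Q⁻¹ *ᵥ polyFeat J x))) :=
  variance_uniformly_minimized_poly_general J f π1 π2 σ1 σ2 hσ1 hσ2 hf_meas hf_nonneg hf_bdd
    hπ1_meas hπ2_meas hπ1_range hπ2_range hπ_sum ν1 ν2 hν1_pos hν2_pos Q1 Q2 Q hQ1 hQ2 hQ hQ1_pos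
    hQ2_pos hQ_pos
end

section
/- Let c > 0 and let f : ℝ → ℝ be a measurable probability density satisfying 0 ≤ f(x) ≤ c for all x ∈ ℝ, such that x ↦ x·f(x) and x ↦ x²·f(x) are integrable, and let μ = ∫_ℝ x·f(x) dx. Then ∫_ℝ (x − μ)²·f(x) dx ≥ 1/(12·c²). -/
/-!
Bathtub argument. For `a ≥ 0` the function `((x - m)² - a²) (f x - c 1_{[m-a, m+a]}(x))` is
nonnegative, since both factors are `≤ 0` on `[m - a, m + a]` and `≥ 0` off it. Integrating gives
`∫ (x - m)² f ≥ a² - (4/3) c a³` for every centre `m`, and `a = 1/(2c)` turns the right side into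
`1/(12c²)`.
-/

open MeasureTheory Set

section BoundedDensity

variable {f : ℝ → ℝ} {c m a : ℝ}

theorem sq_mul_add_indicator_le (ha : 0 ≤ a) {y : ℝ} (hy₀ : 0 ≤ y) (hyc : y ≤ c) (x : ℝ) :
    a ^ 2 * y + (Icc (m - a) (m + a)).indicator (fun x => c * ((x - m) ^ 2 - a ^ 2)) x
      ≤ (x - m) ^ 2 * y := by
  by_cases hx : x ∈ Icc (m - a) (m + a)
  · rw [indicator_of_mem hx]
    have : (x - m) ^ 2 ≤ a ^ 2 := sq_le_sq' (by linarith [hx.1]) (by linarith [hx.2])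
    nlinarith
  · rw [indicator_of_notMem hx]
    have : a ^ 2 ≤ (x - m) ^ 2 := by
      rw [mem_Icc, not_and_or, not_le, not_le] at hx
      rcases hx with h | h <;> nlinarith
    nlinarith

theorem setIntegral_Icc_sq_sub_sq (ha : 0 ≤ a) :
    ∫ x in Icc (m - a) (m + a), c * ((x - m) ^ 2 - a ^ 2) = -(4 / 3) * c * a ^ 3 := by
  rw [integral_Icc_eq_integral_Ioc, ← intervalIntegral.integral_of_le (by linarith),
    intervalIntegral.integral_comp_sub_right (fun u => c * (u ^ 2 - a ^ 2)),
    intervalIntegral.integral_const_mul, intervalIntegral.integral_sub (by simp) (by simp),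
    integral_pow]
  simp only [add_sub_cancel_left, sub_sub_cancel_left, intervalIntegral.integral_const,
    smul_eq_mul]
  ring

theorem sub_le_integral_sq_sub_mul (hf₀ : ∀ x, 0 ≤ f x) (hfc : ∀ x, f x ≤ c)
    (hf : ∫ x, f x = 1) (hm : Integrable fun x => (x - m) ^ 2 * f x) (ha : 0 ≤ a) :
    a ^ 2 - 4 / 3 * c * a ^ 3 ≤ ∫ x, (x - m) ^ 2 * f x := by
  have hf_int : Integrable f := integrable_of_integral_eq_one hf
  have h_ind : Integrable ((Icc (m - a) (m + a)).indicator fun x => c * ((x - m) ^ 2 - a ^ 2)) :=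
    (Continuous.integrableOn_Icc (by fun_prop)).integrable_indicator measurableSet_Icc
  calc a ^ 2 - 4 / 3 * c * a ^ 3
      = ∫ x, a ^ 2 * f x + (Icc (m - a) (m + a)).indicator
          (fun x => c * ((x - m) ^ 2 - a ^ 2)) x := by
        rw [integral_add (hf_int.const_mul _) h_ind, integral_const_mul, hf,
          integral_indicator measurableSet_Icc, setIntegral_Icc_sq_sub_sq ha]
        ring
    _ ≤ ∫ x, (x - m) ^ 2 * f x :=
        integral_mono ((hf_int.const_mul _).add h_ind) hm
          fun x => sq_mul_add_indicator_le ha (hf₀ x) (hfc x) x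

theorem one_div_le_integral_sq_sub_mul (hc : 0 < c) (hf₀ : ∀ x, 0 ≤ f x) (hfc : ∀ x, f x ≤ c)
    (hf : ∫ x, f x = 1) (hm : Integrable fun x => (x - m) ^ 2 * f x) :
    1 / (12 * c ^ 2) ≤ ∫ x, (x - m) ^ 2 * f x := by
  have h := sub_le_integral_sq_sub_mul hf₀ hfc hf hm (one_div_pos.2 (mul_pos two_pos hc)).le
  convert h using 1
  field_simp
  ring

end BoundedDensity

theorem variance_lower_bound_of_bounded_density_general
    (c : ℝ) (hc : 0 < c) (f : ℝ → ℝ)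
    (hf_nonneg : ∀ x, 0 ≤ f x)
    (hf_le : ∀ x, f x ≤ c)
    (hf_density : ∫ x, f x = 1)
    (hint1 : Integrable fun x => x * f x)
    (hint2 : Integrable fun x => x ^ 2 * f x)
    (μ : ℝ) :
    1 / (12 * c ^ 2) ≤ ∫ x, (x - μ) ^ 2 * f x := by
  refine one_div_le_integral_sq_sub_mul hc hf_nonneg hf_le hf_density ?_
  have hf_int : Integrable f := integrable_of_integral_eq_one hf_density
  have h_expand : (fun x => (x - μ) ^ 2 * f x)
      = fun x => x ^ 2 * f x - 2 * μ * (x * f x) + μ ^ 2 * f x := by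
    funext x; ring
  rw [h_expand]
  exact (hint2.sub (hint1.const_mul _)).add (hf_int.const_mul _)

/-- A probability density bounded by `c` has variance at least `1/(12c²)`. -/
theorem variance_lower_bound_of_bounded_density
    (c : ℝ) (hc : 0 < c) (f : ℝ → ℝ)
    (hf_meas : Measurable f)
    (hf_nonneg : ∀ x, 0 ≤ f x)
    (hf_le : ∀ x, f x ≤ c)
    (hf_density : ∫ x, f x = 1)
    (hint1 : Integrable fun x => x * f x)
    (hint2 : Integrable fun x => x ^ 2 * f x)
    (μ : ℝ) (hμ : μ = ∫ x, x * f x) :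
    1 / (12 * c ^ 2) ≤ ∫ x, (x - μ) ^ 2 * f x :=
  variance_lower_bound_of_bounded_density_general c hc f hf_nonneg hf_le hf_density hint1 hint2 μ
end
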